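/- arXiv:2509.25879 — 12 statements merged into one kernel-verified Lean document; each statement's English description precedes it below -/
import Mathlib

section
/- The extent functor from indexed containers to endofunctors on Set^I is faithful: two indexed container morphisms f, g : (S ◁ P) → (S' ◁ P') inducing equal natural transformations ⟦f⟧ = ⟦g⟧ between the extents are themselves equal. -/
/-- An `I`-indexed container `S ◁ P`. -/
structure ICont (I : Type) where
  S : I → Type
  P : (i : I) → S i → I → Type

variable {I : Type}

/-- The extent `⟦S ◁ P⟧ X i := Σ s : S i, ∀ j, P i s j → X j`. -/
def IExt (C : ICont I) (X : I → Type) (i : I) : Type :=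
  Σ s : C.S i, ∀ j, C.P i s j → X j

/-- Functorial action of the extent on maps of families. -/
def iExtMap (C : ICont I) {X Y : I → Type} (h : ∀ i, X i → Y i) (i : I) :
    IExt C X i → IExt C Y i :=
  fun x => ⟨x.1, fun j p => h j (x.2 j p)⟩

/-- A morphism of indexed containers, in its `(σ, π)` form. -/
structure ICHom (C D : ICont I) where
  σ : ∀ i, C.S i → D.S i
  π : ∀ (i : I) (s : C.S i) (j : I), D.P i (σ i s) j → C.P i s j

/-- The natural transformation `⟦f⟧` induced by a container morphism. -/
def ICHom.extNat {C D : ICont I} (f : ICHom C D) (X : I → Type) (i : I) :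
    IExt C X i → IExt D X i :=
  fun x => ⟨f.σ i x.1, fun j p' => x.2 j (f.π i x.1 j p')⟩

/-- The identity container morphism. -/
def ICHom.id (C : ICont I) : ICHom C C :=
  ⟨fun _ s => s, fun _ _ _ p => p⟩

/-- Composition of container morphisms (diagrammatic order). -/
def ICHom.comp {C D E : ICont I} (f : ICHom C D) (g : ICHom D E) : ICHom C E :=
  ⟨fun i s => g.σ i (f.σ i s), fun i s j p => f.π i s j (g.π i (f.σ i s) j p)⟩

/-- The identity container: shapes `Unit`, positions at `(i, ⋆, j)` given by `i = j`. -/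
def idC (I : Type) : ICont I :=
  ⟨fun _ => Unit, fun i _ j => PLift (i = j)⟩

/-- The composite (tensorIC) container. -/
def tensorIC (C D : ICont I) : ICont I :=
  ⟨fun i => IExt C D.S i,
   fun i ss k => Σ j : I, Σ p : C.P i ss.1 j, D.P j (ss.2 j p) k⟩

/-- the extent functor is faithful. -/
theorem extent_faithful {I : Type} {C D : ICont I} (f g : ICHom C D)
    (h : ∀ (X : I → Type) (i : I) (x : IExt C X i), f.extNat X i x = g.extNat X i x) :
    f = g := by
  obtain ⟨σf, πf⟩ := f
  obtain ⟨σg, πg⟩ := g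
  have key : ∀ i (s : C.S i), (⟨σf i s, fun j p' => πf i s j p'⟩ : Σ s' : D.S i, ∀ j, D.P i s' j → C.P i s j)
      = ⟨σg i s, fun j p' => πg i s j p'⟩ := fun i s => h (C.P i s) i ⟨s, fun _ p => p⟩
  have hσ : σf = σg := by
    funext i s
    exact congrArg Sigma.fst (key i s)
  subst hσ
  have hπ : πf = πg := by
    funext i s j p
    have hk := key i s
    injection hk with h1 h2
    exact congrFun (congrFun h2 j) p
  subst hπ
  rfl
end

section
/- The extent functor from indexed containers to endofunctors on Set^I is full: every natural transformation α : ⟦S ◁ P⟧ ⇒ ⟦S' ◁ P'⟧ between extents of indexed containers arises as ⟦f⟧ for some container morphism f : (S ◁ P) → (S' ◁ P'). -/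
variable {I : Type}

/-!
Yoneda: `⟦C⟧ X i` is a coproduct over shapes `s` of representables `∀ j, C.P i s j → X j`, and
every element `⟨s, v⟩` is the image under `v` of the generic element `⟨s, id⟩ : ⟦C⟧ (C.P i s) i`.
A natural transformation is therefore determined by its values on generic elements, whose
shape and position map are exactly the data `(σ, π)` of a container morphism.
-/

def IExt.generic (C : ICont I) (i : I) (s : C.S i) : IExt C (C.P i s) i :=
  ⟨s, fun _ p => p⟩

theorem IExt.iExtMap_generic (C : ICont I) {X : I → Type} (i : I) (x : IExt C X i) :
    iExtMap C x.2 i (IExt.generic C i x.1) = x :=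
  rfl

def ICHom.ofExtTrans {C D : ICont I} (α : ∀ (X : I → Type) (i : I), IExt C X i → IExt D X i) :
    ICHom C D where
  σ i s := (α (C.P i s) i (IExt.generic C i s)).1
  π i s j p := (α (C.P i s) i (IExt.generic C i s)).2 j p

theorem ICHom.extNat_ofExtTrans {C D : ICont I}
    (α : ∀ (X : I → Type) (i : I), IExt C X i → IExt D X i)
    (hnat : ∀ (X Y : I → Type) (h : ∀ i, X i → Y i) (i : I) (x : IExt C X i),
      α Y i (iExtMap C h i x) = iExtMap D h i (α X i x))
    (X : I → Type) (i : I) (x : IExt C X i) :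
    (ICHom.ofExtTrans α).extNat X i x = α X i x :=
  calc (ICHom.ofExtTrans α).extNat X i x
      = iExtMap D x.2 i (α (C.P i x.1) i (IExt.generic C i x.1)) := rfl
    _ = α X i (iExtMap C x.2 i (IExt.generic C i x.1)) := (hnat _ _ x.2 i _).symm
    _ = α X i x := congrArg (α X i) (IExt.iExtMap_generic C i x)

/-- the extent functor is full. -/
theorem extent_full {I : Type} {C D : ICont I}
    (α : ∀ (X : I → Type) (i : I), IExt C X i → IExt D X i)
    (hnat : ∀ (X Y : I → Type) (h : ∀ i, X i → Y i) (i : I) (x : IExt C X i),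
      α Y i (iExtMap C h i x) = iExtMap D h i (α X i x)) :
    ∃ f : ICHom C D, ∀ (X : I → Type) (i : I) (x : IExt C X i),
      f.extNat X i x = α X i x :=
  ⟨ICHom.ofExtTrans α, ICHom.extNat_ofExtTrans α hnat⟩
end

section
/- The natural transformations from ⟦S ◁ P⟧ to ⟦S' ◁ P'⟧ are in bijection with ∀ i (s : S i), ⟦S' ◁ P'⟧ (P i s) i; equivalently, Nat(⟦S ◁ P⟧, ⟦S' ◁ P'⟧) ≃ ∀ i (s : S i), Σ (s' : S' i), ∀ j, P' i s' j → P i s j. -/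
variable {I : Type}

/-!
Every element `⟨s, k⟩ : ⟦C⟧ X i` is the image of the generic element
`⟨s, id⟩ : ⟦C⟧ (P i s) i` under `k`, so naturality determines a transformation by its values
on generic elements. Such a value lies in `⟦D⟧ (P i s) i`, i.e. it is a shape `s'` of `D`
together with a map of positions `P' i s' j → P i s j`: exactly a container morphism, whose
extension recovers the transformation.
-/

namespace ICont

def generic (C : ICont I) (i : I) (s : C.S i) : IExt C (C.P i s) i :=
  ⟨s, fun _ p => p⟩

theorem iExtMap_generic (C : ICont I) {X : I → Type} {i : I} (x : IExt C X i) :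
    iExtMap C x.2 i (C.generic i x.1) = x :=
  rfl

def IsNatural {C D : ICont I} (α : ∀ (X : I → Type) (i : I), IExt C X i → IExt D X i) :
    Prop :=
  ∀ (X Y : I → Type) (h : ∀ i, X i → Y i) (i : I) (x : IExt C X i),
    α Y i (iExtMap C h i x) = iExtMap D h i (α X i x)

end ICont

namespace ICHom

open ICont

variable {C D : ICont I}

theorem isNatural_extNat (f : ICHom C D) : IsNatural f.extNat :=
  fun _ _ _ _ _ => rfl

def ofGeneric (α : ∀ (X : I → Type) (i : I), IExt C X i → IExt D X i) : ICHom C D :=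
  ⟨fun i s => (α _ i (C.generic i s)).1, fun i s j => (α _ i (C.generic i s)).2 j⟩

theorem ofGeneric_extNat (f : ICHom C D) : ofGeneric f.extNat = f :=
  rfl

theorem extNat_ofGeneric {α : ∀ (X : I → Type) (i : I), IExt C X i → IExt D X i}
    (hα : IsNatural α) : (ofGeneric α).extNat = α := by
  funext X i x
  rw [← C.iExtMap_generic x, hα]
  rfl

def equivNat :
    ICHom C D ≃ {α : ∀ (X : I → Type) (i : I), IExt C X i → IExt D X i // IsNatural α} where
  toFun f := ⟨f.extNat, f.isNatural_extNat⟩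
  invFun α := ofGeneric α.1
  left_inv := ofGeneric_extNat
  right_inv α := Subtype.ext (extNat_ofGeneric α.2)

def equivPi :
    ICHom C D ≃ ∀ (i : I) (s : C.S i), Σ s' : D.S i, ∀ j, D.P i s' j → C.P i s j where
  toFun f i s := ⟨f.σ i s, f.π i s⟩
  invFun t := ⟨fun i s => (t i s).1, fun i s => (t i s).2⟩
  left_inv _ := rfl
  right_inv _ := rfl

end ICHom

/-- natural transformations between extents are in bijection with
`∀ i (s : S i), Σ (s' : S' i), ∀ j, P' i s' j → P i s j`. -/
theorem nat_equiv_containerHom {I : Type} (C D : ICont I) :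
    Nonempty
      ({α : ∀ (X : I → Type) (i : I), IExt C X i → IExt D X i //
          ∀ (X Y : I → Type) (h : ∀ i, X i → Y i) (i : I) (x : IExt C X i),
            α Y i (iExtMap C h i x) = iExtMap D h i (α X i x)} ≃
        (∀ (i : I) (s : C.S i), Σ s' : D.S i, ∀ j, D.P i s' j → C.P i s j)) :=
  ⟨ICHom.equivNat.symm.trans ICHom.equivPi⟩
end

section
/- The identity container I_c and the composition tensor ⊗ make the category of I-indexed containers into a monoidal category: there are natural isomorphisms λ : I_c ⊗ C ≅ C, ρ : C ⊗ I_c ≅ C, and α : (C ⊗ D) ⊗ E ≅ C ⊗ (D ⊗ E) satisfying the triangle and pentagon equations. -/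
variable {I : Type}

/-- Tensor product of container morphisms. -/
def tensorHom {I : Type} {C C' D D' : ICont I} (f : ICHom C C') (g : ICHom D D') :
    ICHom (tensorIC C D) (tensorIC C' D') where
  σ i ss := ⟨f.σ i ss.1, fun j p' => g.σ j (ss.2 j (f.π i ss.1 j p'))⟩
  π i ss k := fun q =>
    ⟨q.1, f.π i ss.1 q.1 q.2.1,
      g.π q.1 (ss.2 q.1 (f.π i ss.1 q.1 q.2.1)) k q.2.2⟩

/-- The left unitor `I_c ⊗ C → C`. -/
def lamHom {I : Type} (C : ICont I) : ICHom (tensorIC (idC I) C) C where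
  σ i ss := ss.2 i ⟨rfl⟩
  π i ss j p := ⟨i, ⟨rfl⟩, p⟩

/-- The right unitor `C ⊗ I_c → C`. -/
def rhoHom {I : Type} (C : ICont I) : ICHom (tensorIC C (idC I)) C where
  σ i ss := ss.1
  π i ss j p := ⟨j, p, ⟨rfl⟩⟩

/-- The associator `(C ⊗ D) ⊗ E → C ⊗ (D ⊗ E)`. -/
def assocHom {I : Type} (C D E : ICont I) :
    ICHom (tensorIC (tensorIC C D) E) (tensorIC C (tensorIC D E)) where
  σ i ss := ⟨ss.1.1, fun j p => ⟨ss.1.2 j p, fun k q => ss.2 k ⟨j, p, q⟩⟩⟩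
  π i ss l := fun q => ⟨q.2.2.1, ⟨q.1, q.2.1, q.2.2.2.1⟩, q.2.2.2.2⟩

/-- The data of a monoidal category structure on `IC_I` with unit `idC I` and the
composition tensor `⊗`: bifunctoriality of the tensor, natural isomorphisms
`λ`, `ρ`, `α` and the triangle and pentagon equations. -/
structure MonoidalData (I : Type) where
  tensor_id : ∀ C D : ICont I,
    tensorHom (ICHom.id C) (ICHom.id D) = ICHom.id (tensorIC C D)
  tensor_comp : ∀ {C C' C'' D D' D'' : ICont I}
    (f : ICHom C C') (f' : ICHom C' C'') (g : ICHom D D') (g' : ICHom D' D''),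
    tensorHom (f.comp f') (g.comp g') = (tensorHom f g).comp (tensorHom f' g')
  lam : ∀ C : ICont I, ICHom (tensorIC (idC I) C) C
  lamInv : ∀ C : ICont I, ICHom C (tensorIC (idC I) C)
  lam_iso₁ : ∀ C, (lam C).comp (lamInv C) = ICHom.id _
  lam_iso₂ : ∀ C, (lamInv C).comp (lam C) = ICHom.id _
  lam_nat : ∀ {C D : ICont I} (f : ICHom C D),
    (tensorHom (ICHom.id (idC I)) f).comp (lam D) = (lam C).comp f
  rho : ∀ C : ICont I, ICHom (tensorIC C (idC I)) C
  rhoInv : ∀ C : ICont I, ICHom C (tensorIC C (idC I))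
  rho_iso₁ : ∀ C, (rho C).comp (rhoInv C) = ICHom.id _
  rho_iso₂ : ∀ C, (rhoInv C).comp (rho C) = ICHom.id _
  rho_nat : ∀ {C D : ICont I} (f : ICHom C D),
    (tensorHom f (ICHom.id (idC I))).comp (rho D) = (rho C).comp f
  assoc : ∀ C D E : ICont I,
    ICHom (tensorIC (tensorIC C D) E) (tensorIC C (tensorIC D E))
  assocInv : ∀ C D E : ICont I,
    ICHom (tensorIC C (tensorIC D E)) (tensorIC (tensorIC C D) E)
  assoc_iso₁ : ∀ C D E, (assoc C D E).comp (assocInv C D E) = ICHom.id _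
  assoc_iso₂ : ∀ C D E, (assocInv C D E).comp (assoc C D E) = ICHom.id _
  assoc_nat : ∀ {C C' D D' E E' : ICont I}
    (f : ICHom C C') (g : ICHom D D') (h : ICHom E E'),
    (tensorHom (tensorHom f g) h).comp (assoc C' D' E') =
      (assoc C D E).comp (tensorHom f (tensorHom g h))
  triangle : ∀ C D : ICont I,
    (assoc C (idC I) D).comp (tensorHom (ICHom.id C) (lam D)) =
      tensorHom (rho C) (ICHom.id D)
  pentagon : ∀ A B C D : ICont I,
    (tensorHom (assoc A B C) (ICHom.id D)).comp
        ((assoc A (tensorIC B C) D).comp (tensorHom (ICHom.id A) (assoc B C D))) =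
      (assoc (tensorIC A B) C D).comp (assoc A B (tensorIC C D))

namespace ICAux

def lamInvHom (C : ICont I) : ICHom C (tensorIC (idC I) C) where
  σ i s := ⟨(), fun j p => p.down ▸ s⟩
  π i s j := fun q =>
    match q with
    | ⟨_, ⟨rfl⟩, p⟩ => p

def rhoInvHom (C : ICont I) : ICHom C (tensorIC C (idC I)) where
  σ i s := ⟨s, fun _ _ => ()⟩
  π i s j := fun q =>
    match q with
    | ⟨_, p, ⟨rfl⟩⟩ => p

def assocInvHom (C D E : ICont I) :
    ICHom (tensorIC C (tensorIC D E)) (tensorIC (tensorIC C D) E) where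
  σ i ss := ⟨⟨ss.1, fun j p => (ss.2 j p).1⟩, fun k q => (ss.2 q.1 q.2.1).2 k q.2.2⟩
  π i ss l := fun q => ⟨q.2.1.1, q.2.1.2.1, q.1, q.2.1.2.2, q.2.2⟩

def toFun {C D : ICont I} (f : ICHom C D) :
    ∀ i (s : C.S i), Σ d : D.S i, ∀ j, D.P i d j → C.P i s j :=
  fun i s => ⟨f.σ i s, f.π i s⟩

theorem ext' {C D : ICont I} {f g : ICHom C D} (h : toFun f = toFun g) : f = g := by
  have : f = ⟨fun i s => (toFun f i s).1, fun i s => (toFun f i s).2⟩ := rfl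
  rw [this, h]; rfl

end ICAux

open ICAux

/-- `(IC_I, I_c, ⊗)` is a monoidal category. -/
theorem icont_monoidal (I : Type) : Nonempty (MonoidalData I) := by
  refine ⟨{
    tensor_id := fun C D => rfl
    tensor_comp := fun f f' g g' => rfl
    lam := lamHom
    lamInv := lamInvHom
    lam_iso₁ := fun C => ?_
    lam_iso₂ := fun C => ?_
    lam_nat := fun f => rfl
    rho := rhoHom
    rhoInv := rhoInvHom
    rho_iso₁ := fun C => ?_
    rho_iso₂ := fun C => ?_
    rho_nat := fun f => rfl
    assoc := assocHom
    assocInv := assocInvHom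
    assoc_iso₁ := fun C D E => rfl
    assoc_iso₂ := fun C D E => rfl
    assoc_nat := fun f g h => rfl
    triangle := fun C D => rfl
    pentagon := fun A B C D => rfl
  }⟩
  · -- lam_iso₁
    apply ext'
    funext i ss
    obtain ⟨⟨⟩, F⟩ := ss
    have key : ∀ (a : C.S i) (F : ∀ j, (idC I).P i ⟨⟩ j → C.S j),
        F = (fun j p => p.down ▸ a) →
        toFun ((lamHom C).comp (lamInvHom C)) i ⟨⟨⟩, F⟩ =
          toFun (ICHom.id (tensorIC (idC I) C)) i ⟨⟨⟩, F⟩ := by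
      intro a F hF
      subst hF
      refine Sigma.ext rfl (heq_of_eq ?_)
      funext j p
      obtain ⟨j2, ⟨e⟩, q⟩ := p
      subst e
      rfl
    exact key (F i ⟨rfl⟩) F (by funext j p; obtain ⟨rfl⟩ := p; rfl)
  · -- lam_iso₂
    apply ext'
    funext i s
    rfl
  · -- rho_iso₁
    apply ext'
    funext i ss
    refine Sigma.ext rfl (heq_of_eq ?_)
    funext l p
    obtain ⟨j', q, ⟨e⟩⟩ := p
    subst e
    rfl
  · -- rho_iso₂
    apply ext'
    funext i s
    rfl
end

section
/- The extent functor is strong monoidal from (IC_I, I_c, ⊗) to (Endo(Set^I), Id, ∘): the extent of the identity container is naturally isomorphic to the identity endofunctor on Set^I, and for any indexed containers C, D there is a natural isomorphism ⟦C⟧ ∘ ⟦D⟧ ≅ ⟦C ⊗ D⟧, compatible with unitors and associators. -/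
variable {I : Type}

/-- The data making the extent functor strong monoidal from `(IC_I, I_c, ⊗)` to
`(Endo(Set^I), Id, ∘)`: a natural isomorphism `ε : Id ≅ ⟦I_c⟧`, a natural
isomorphism `ψ : ⟦C⟧ ∘ ⟦D⟧ ≅ ⟦C ⊗ D⟧` natural also in `C` and `D`, compatible
with the unitors and the associators. -/
structure StrongMonoidalData (I : Type) where
  ε : ∀ (X : I → Type) (i : I), X i → IExt (idC I) X i
  ε_bij : ∀ X i, Function.Bijective (ε X i)
  ε_nat : ∀ (X Y : I → Type) (h : ∀ i, X i → Y i) (i : I) (x : X i),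
    ε Y i (h i x) = iExtMap (idC I) h i (ε X i x)
  ψ : ∀ (C D : ICont I) (X : I → Type) (i : I),
    IExt C (IExt D X) i → IExt (tensorIC C D) X i
  ψ_bij : ∀ C D X i, Function.Bijective (ψ C D X i)
  ψ_nat : ∀ (C D : ICont I) (X Y : I → Type) (h : ∀ i, X i → Y i) (i : I)
    (x : IExt C (IExt D X) i),
    ψ C D Y i (iExtMap C (fun j => iExtMap D h j) i x) =
      iExtMap (tensorIC C D) h i (ψ C D X i x)
  ψ_nat₂ : ∀ {C C' D D' : ICont I} (f : ICHom C C') (g : ICHom D D')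
    (X : I → Type) (i : I) (x : IExt C (IExt D X) i),
    ψ C' D' X i (f.extNat (IExt D' X) i (iExtMap C (fun j => g.extNat X j) i x)) =
      (tensorHom f g).extNat X i (ψ C D X i x)
  unit_left : ∀ (C : ICont I) (X : I → Type) (i : I) (x : IExt C X i),
    (lamHom C).extNat X i (ψ (idC I) C X i (ε (fun j => IExt C X j) i x)) = x
  unit_right : ∀ (C : ICont I) (X : I → Type) (i : I) (x : IExt C X i),
    (rhoHom C).extNat X i (ψ C (idC I) X i (iExtMap C (fun j y => ε X j y) i x)) = x
  assoc_compat : ∀ (C D E : ICont I) (X : I → Type) (i : I)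
    (x : IExt C (IExt D (IExt E X)) i),
    (assocHom C D E).extNat X i
        (ψ (tensorIC C D) E X i (ψ C D (IExt E X) i x)) =
      ψ C (tensorIC D E) X i (iExtMap C (fun j y => ψ D E X j y) i x)

/-- the extent functor is strong monoidal. -/
theorem extent_strong_monoidal (I : Type) : Nonempty (StrongMonoidalData I) := by
  refine ⟨{
    ε := fun X i x => ⟨(), fun j p => p.down ▸ x⟩
    ε_bij := ?_
    ε_nat := ?_
    ψ := fun C D X i x =>
      ⟨⟨x.1, fun j p => (x.2 j p).1⟩, fun k q => (x.2 q.1 q.2.1).2 k q.2.2⟩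
    ψ_bij := ?_
    ψ_nat := ?_
    ψ_nat₂ := ?_
    unit_left := ?_
    unit_right := ?_
    assoc_compat := ?_ }⟩
  · intro X i
    constructor
    · intro x y h
      have := congrArg (fun z => z.2 i ⟨rfl⟩) h
      simpa using this
    · intro y
      refine ⟨y.2 i ⟨rfl⟩, ?_⟩
      obtain ⟨⟨⟩, f⟩ := y
      refine congrArg (Sigma.mk ()) ?_
      funext j p
      obtain ⟨rfl⟩ := p
      rfl
  · intro X Y h i x
    refine congrArg (Sigma.mk ()) ?_
    funext j p
    obtain ⟨rfl⟩ := p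
    rfl
  · intro C D X i
    constructor
    · have : Function.LeftInverse
        (fun y : IExt (tensorIC C D) X i =>
          (⟨y.1.1, fun j p => ⟨y.1.2 j p, fun k q => y.2 k ⟨j, p, q⟩⟩⟩ :
            IExt C (IExt D X) i))
        (fun x : IExt C (IExt D X) i =>
          ⟨⟨x.1, fun j p => (x.2 j p).1⟩, fun k q => (x.2 q.1 q.2.1).2 k q.2.2⟩) :=
        fun x => rfl
      exact this.injective
    · intro y
      exact ⟨⟨y.1.1, fun j p => ⟨y.1.2 j p, fun k q => y.2 k ⟨j, p, q⟩⟩⟩, rfl⟩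
  · intro C D X Y h i x; rfl
  · intro C C' D D' f g X i x; rfl
  · intro C X i x
    obtain ⟨s, f⟩ := x
    rfl
  · intro C X i x
    obtain ⟨s, f⟩ := x
    refine congrArg (Sigma.mk s) ?_
    funext j p
    rfl
  · intro C D E X i x; rfl
end

section
/- For indexed containers C = (S⁰ ◁ P⁰) and D = (S¹ ◁ P¹), the composite of extents ⟦C⟧ ∘ ⟦D⟧ is naturally isomorphic to the extent of the composite container ⟦C ⊗ D⟧: for all X : I → Set and i : I, Σ (s : S⁰ i), ∀ j, P⁰ i s j → Σ (s' : S¹ j), ∀ k, P¹ j s' k → X k is equivalent to Σ ((s, s') : Σ (s : S⁰ i), ∀ j, P⁰ i s j → S¹ j), ∀ k, (Σ (j : I) (p : P⁰ i s j), P¹ j (s' j p) k) → X k. -/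
variable {I : Type}

/-- the composite of extents is naturally isomorphic to the extent of
the composite container. -/
theorem composite_container_extent {I : Type} (C D : ICont I) :
    ∃ e : ∀ (X : I → Type) (i : I), IExt C (IExt D X) i ≃ IExt (tensorIC C D) X i,
      ∀ (X Y : I → Type) (h : ∀ i, X i → Y i) (i : I) (x : IExt C (IExt D X) i),
        e Y i (iExtMap C (fun j => iExtMap D h j) i x) =
          iExtMap (tensorIC C D) h i (e X i x) := by
  refine ⟨fun X i =>
    { toFun := fun x => ⟨⟨x.1, fun j p => (x.2 j p).1⟩,
        fun k q => (x.2 q.1 q.2.1).2 k q.2.2⟩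
      invFun := fun y => ⟨y.1.1, fun j p => ⟨y.1.2 j p, fun k q => y.2 k ⟨j, p, q⟩⟩⟩
      left_inv := fun x => rfl
      right_inv := fun y => rfl }, fun X Y h i x => rfl⟩
end

section
/- For an I-indexed container (S ◁ P), the type of monoid structures on (S ◁ P) in the monoidal category (IC_I, I_c, ⊗) is equivalent to the type ICMS(S ◁ P) of indexed container monoid structures, i.e., data (e, •, Pe≡, ↑, ↖, ↗) satisfying the eleven equations e-unit-l, ↖-unit-l, e-unit-r, ↗-unit-r, •-assoc, ↑-↗↑-assoc, ↖↑-↑-assoc, ↖↖-↖-assoc, ↖↗-↗↖-assoc, ↗-↗↗-assoc. -/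
variable {I : Type}

/-- The data of an indexed container monoid structure (ICMS). -/
structure ICMSData {I : Type} (C : ICont I) where
  e : ∀ i, C.S i
  mul : ∀ (i : I) (s : C.S i), (∀ j, C.P i s j → C.S j) → C.S i
  Pe : ∀ (i j : I), C.P i (e i) j → i = j
  up : ∀ (i : I) (s : C.S i) (s' : ∀ j, C.P i s j → C.S j) (j : I),
    C.P i (mul i s s') j → I
  ul : ∀ (i : I) (s : C.S i) (s' : ∀ j, C.P i s j → C.S j) (j : I)
    (p : C.P i (mul i s s') j), C.P i s (up i s s' j p)
  ur : ∀ (i : I) (s : C.S i) (s' : ∀ j, C.P i s j → C.S j) (j : I)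
    (p : C.P i (mul i s s') j),
    C.P (up i s s' j p) (s' (up i s s' j p) (ul i s s' j p)) j

namespace ICMSData

variable {I : Type} {C : ICont I} (D : ICMSData C)

/-- The constant-unit family `e^P`. -/
def eP {i : I} (s : C.S i) : ∀ j, C.P i s j → C.S j := fun j _ => D.e j

/-- The constant family `s̄` over unit positions (transported along `Pe`). -/
def sbar {i : I} (s : C.S i) : ∀ j, C.P i (D.e i) j → C.S j :=
  fun j p => D.Pe i j p ▸ s

/-- Pointwise multiplication `s' •^P s''`. -/
def mulP {i : I} (s : C.S i) (s' : ∀ j, C.P i s j → C.S j)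
    (s'' : ∀ (k : I) (q : C.P i s k) (l : I), C.P k (s' k q) l → C.S l) :
    ∀ k, C.P i s k → C.S k :=
  fun k q => D.mul k (s' k q) (s'' k q)

/-- The reassociated family `⟨s''⟩`. -/
def smoosh {i : I} (s : C.S i) (s' : ∀ j, C.P i s j → C.S j)
    (s'' : ∀ (k : I) (q : C.P i s k) (l : I), C.P k (s' k q) l → C.S l) :
    ∀ l, C.P i (D.mul i s s') l → C.S l :=
  fun l r => s'' (D.up i s s' l r) (D.ul i s s' l r) l (D.ur i s s' l r)

end ICMSData

/-- The equations of an indexed container monoid structure. Some of the equations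
are heterogeneous; they are stated using `HEq`, quantifying over a transported
position `p₂` heterogeneously equal to `p`. -/
structure ICMSLaws {I : Type} (C : ICont I) (D : ICMSData C) : Prop where
  e_unit_l : ∀ (i : I) (s : C.S i), D.mul i s (D.eP s) = s
  ul_unit_l : ∀ (i : I) (s : C.S i) (j : I) (p : C.P i (D.mul i s (D.eP s)) j),
    HEq (D.ul i s (D.eP s) j p) p
  e_unit_r : ∀ (i : I) (s : C.S i), D.mul i (D.e i) (D.sbar s) = s
  ur_unit_r : ∀ (i : I) (s : C.S i) (j : I)
    (p : C.P i (D.mul i (D.e i) (D.sbar s)) j),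
    HEq (D.ur i (D.e i) (D.sbar s) j p) p
  mul_assoc : ∀ (i : I) (s : C.S i) (s' : ∀ j, C.P i s j → C.S j)
    (s'' : ∀ (k : I) (q : C.P i s k) (l : I), C.P k (s' k q) l → C.S l),
    D.mul i (D.mul i s s') (D.smoosh s s' s'') = D.mul i s (D.mulP s s' s'')
  up_assoc : ∀ (i : I) (s : C.S i) (s' : ∀ j, C.P i s j → C.S j)
    (s'' : ∀ (k : I) (q : C.P i s k) (l : I), C.P k (s' k q) l → C.S l) (j : I)
    (p : C.P i (D.mul i (D.mul i s s') (D.smoosh s s' s'')) j)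
    (p₂ : C.P i (D.mul i s (D.mulP s s' s'')) j), HEq p p₂ →
    D.up i (D.mul i s s') (D.smoosh s s' s'') j p =
      D.up (D.up i s (D.mulP s s' s'') j p₂)
        (s' (D.up i s (D.mulP s s' s'') j p₂) (D.ul i s (D.mulP s s' s'') j p₂))
        (s'' (D.up i s (D.mulP s s' s'') j p₂) (D.ul i s (D.mulP s s' s'') j p₂)) j
        (D.ur i s (D.mulP s s' s'') j p₂)
  ulup_up_assoc : ∀ (i : I) (s : C.S i) (s' : ∀ j, C.P i s j → C.S j)
    (s'' : ∀ (k : I) (q : C.P i s k) (l : I), C.P k (s' k q) l → C.S l) (j : I)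
    (p : C.P i (D.mul i (D.mul i s s') (D.smoosh s s' s'')) j)
    (p₂ : C.P i (D.mul i s (D.mulP s s' s'')) j), HEq p p₂ →
    D.up i s s' (D.up i (D.mul i s s') (D.smoosh s s' s'') j p)
        (D.ul i (D.mul i s s') (D.smoosh s s' s'') j p) =
      D.up i s (D.mulP s s' s'') j p₂
  ulul_ul_assoc : ∀ (i : I) (s : C.S i) (s' : ∀ j, C.P i s j → C.S j)
    (s'' : ∀ (k : I) (q : C.P i s k) (l : I), C.P k (s' k q) l → C.S l) (j : I)
    (p : C.P i (D.mul i (D.mul i s s') (D.smoosh s s' s'')) j)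
    (p₂ : C.P i (D.mul i s (D.mulP s s' s'')) j), HEq p p₂ →
    HEq (D.ul i s s' (D.up i (D.mul i s s') (D.smoosh s s' s'') j p)
          (D.ul i (D.mul i s s') (D.smoosh s s' s'') j p))
        (D.ul i s (D.mulP s s' s'') j p₂)
  ulur_urul_assoc : ∀ (i : I) (s : C.S i) (s' : ∀ j, C.P i s j → C.S j)
    (s'' : ∀ (k : I) (q : C.P i s k) (l : I), C.P k (s' k q) l → C.S l) (j : I)
    (p : C.P i (D.mul i (D.mul i s s') (D.smoosh s s' s'')) j)
    (p₂ : C.P i (D.mul i s (D.mulP s s' s'')) j), HEq p p₂ →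
    HEq (D.ur i s s' (D.up i (D.mul i s s') (D.smoosh s s' s'') j p)
          (D.ul i (D.mul i s s') (D.smoosh s s' s'') j p))
        (D.ul (D.up i s (D.mulP s s' s'') j p₂)
          (s' (D.up i s (D.mulP s s' s'') j p₂) (D.ul i s (D.mulP s s' s'') j p₂))
          (s'' (D.up i s (D.mulP s s' s'') j p₂) (D.ul i s (D.mulP s s' s'') j p₂)) j
          (D.ur i s (D.mulP s s' s'') j p₂))
  ur_urur_assoc : ∀ (i : I) (s : C.S i) (s' : ∀ j, C.P i s j → C.S j)
    (s'' : ∀ (k : I) (q : C.P i s k) (l : I), C.P k (s' k q) l → C.S l) (j : I)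
    (p : C.P i (D.mul i (D.mul i s s') (D.smoosh s s' s'')) j)
    (p₂ : C.P i (D.mul i s (D.mulP s s' s'')) j), HEq p p₂ →
    HEq (D.ur i (D.mul i s s') (D.smoosh s s' s'') j p)
        (D.ur (D.up i s (D.mulP s s' s'') j p₂)
          (s' (D.up i s (D.mulP s s' s'') j p₂) (D.ul i s (D.mulP s s' s'') j p₂))
          (s'' (D.up i s (D.mulP s s' s'') j p₂) (D.ul i s (D.mulP s s' s'') j p₂)) j
          (D.ur i s (D.mulP s s' s'') j p₂))

/-- An indexed container monoid structure: data together with the laws. -/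
structure ICMS {I : Type} (C : ICont I) where
  data : ICMSData C
  laws : ICMSLaws C data

/-- A monoid in the monoidal category `(IC_I, I_c, ⊗)`. -/
structure ICMonoid {I : Type} (C : ICont I) where
  η : ICHom (idC I) C
  μ : ICHom (tensorIC C C) C
  unit_l : (tensorHom η (ICHom.id C)).comp μ = lamHom C
  unit_r : (tensorHom (ICHom.id C) η).comp μ = rhoHom C
  mul_assoc : (tensorHom μ (ICHom.id C)).comp μ =
    (assocHom C C C).comp ((tensorHom (ICHom.id C) μ).comp μ)

/-! ### Auxiliary lemmas and constructions for the equivalence -/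

section Aux

variable {C : ICont I}

/-- Extensionality for container morphisms, with pointwise hypotheses. -/
theorem ICHom.ext_het {C D : ICont I} {f g : ICHom C D}
    (hσ : ∀ i s, f.σ i s = g.σ i s)
    (hπ : ∀ i s j (p : D.P i (f.σ i s) j) (p' : D.P i (g.σ i s) j),
      HEq p p' → f.π i s j p = g.π i s j p') :
    f = g := by
  obtain ⟨fσ, fπ⟩ := f; obtain ⟨gσ, gπ⟩ := g
  have h : fσ = gσ := funext fun i => funext fun s => hσ i s
  subst h
  simp only [ICHom.mk.injEq, heq_eq_eq, true_and]
  funext i s j p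
  exact hπ i s j p p HEq.rfl

theorem ICHom.σ_eq {C D : ICont I} {f g : ICHom C D} (h : f = g) :
    ∀ i s, f.σ i s = g.σ i s := by subst h; intro _ _; rfl

theorem ICHom.π_heq {C D : ICont I} {f g : ICHom C D} (h : f = g)
    (i : I) (s : C.S i) (j : I) (p : D.P i (f.σ i s) j) (p' : D.P i (g.σ i s) j)
    (hp : HEq p p') : f.π i s j p = g.π i s j p' := by
  subst h; cases eq_of_heq hp; rfl

theorem sigma_sigma_inj {A : Type} {Q : A → Type} {R : ∀ a, Q a → Type}
    {x y : Σ a, Σ q : Q a, R a q} (h : x = y) :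
    x.1 = y.1 ∧ HEq x.2.1 y.2.1 ∧ HEq x.2.2 y.2.2 := by
  subst h; exact ⟨rfl, HEq.rfl, HEq.rfl⟩

theorem sigma_sigma_ext {A : Type} {Q : A → Type} {R : ∀ a, Q a → Type}
    {x y : Σ a, Σ q : Q a, R a q}
    (ha : x.1 = y.1) (hq : HEq x.2.1 y.2.1) (hr : HEq x.2.2 y.2.2) : x = y := by
  obtain ⟨a, q, r⟩ := x
  obtain ⟨a', q', r'⟩ := y
  dsimp only at ha hq hr
  subst ha; cases hq; cases hr; rfl

theorem triple_heq_inj {A I' : Type} {Q : A → Type} {R : ∀ a, Q a → I' → Type}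
    {k k' : I'} {x : Σ a, Σ q : Q a, R a q k} {y : Σ a, Σ q : Q a, R a q k'}
    (hk : k = k') (h : HEq x y) :
    x.1 = y.1 ∧ HEq x.2.1 y.2.1 ∧ HEq x.2.2 y.2.2 := by
  subst hk; cases h; exact ⟨rfl, HEq.rfl, HEq.rfl⟩

theorem triple_heq_mk {A I' : Type} {Q : A → Type} {R : ∀ a, Q a → I' → Type}
    {k k' : I'} {x : Σ a, Σ q : Q a, R a q k} {y : Σ a, Σ q : Q a, R a q k'}
    (hk : k = k') (ha : x.1 = y.1) (hq : HEq x.2.1 y.2.1) (hr : HEq x.2.2 y.2.2) :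
    HEq x y := by
  subst hk
  exact heq_of_eq (sigma_sigma_ext (Q := Q) (R := fun a q => R a q k) ha hq hr)

/-- The ICMS data extracted from a monoid in `(IC_I, I_c, ⊗)`. -/
def dataOf (M : ICMonoid C) : ICMSData C where
  e i := M.η.σ i ⟨⟩
  mul i s s' := M.μ.σ i ⟨s, s'⟩
  Pe i j p := (M.η.π i ⟨⟩ j p).down
  up i s s' j p := (M.μ.π i ⟨s, s'⟩ j p).1
  ul i s s' j p := (M.μ.π i ⟨s, s'⟩ j p).2.1
  ur i s s' j p := (M.μ.π i ⟨s, s'⟩ j p).2.2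

/-- The unit morphism associated to ICMS data. -/
def ηOf (D : ICMSData C) : ICHom (idC I) C where
  σ i _ := D.e i
  π i _ j p := ⟨D.Pe i j p⟩

/-- The multiplication morphism associated to ICMS data. -/
def μOf (D : ICMSData C) : ICHom (tensorIC C C) C where
  σ i ss := D.mul i ss.1 ss.2
  π i ss j p := ⟨D.up i ss.1 ss.2 j p, D.ul i ss.1 ss.2 j p, D.ur i ss.1 ss.2 j p⟩

theorem plift_prop_heq {p q : Prop} (h : p ↔ q) (a : PLift p) (b : PLift q) :
    HEq a b := by
  cases propext h
  cases Subsingleton.elim a b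
  rfl

theorem lawsOf (M : ICMonoid C) : ICMSLaws C (dataOf M) := by
  constructor
  · -- e_unit_l
    intro i s
    exact ICHom.σ_eq M.unit_r i ⟨s, fun _ _ => ⟨⟩⟩
  · -- ul_unit_l
    intro i s j p
    have hσ : _ = _ := ICHom.σ_eq M.unit_r i ⟨s, fun _ _ => ⟨⟩⟩
    have hp : HEq p (cast (congrArg (fun x => C.P i x j) hσ) p) :=
      (cast_heq _ p).symm
    have h := ICHom.π_heq M.unit_r i ⟨s, fun _ _ => ⟨⟩⟩ j p _ hp
    obtain ⟨h1, h2, h3⟩ := sigma_sigma_inj h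
    exact h2.trans hp.symm
  · -- e_unit_r
    intro i s
    exact ICHom.σ_eq M.unit_l i ⟨⟨⟩, fun j h => h.down ▸ s⟩
  · -- ur_unit_r
    intro i s j p
    have hσ : _ = _ := ICHom.σ_eq M.unit_l i ⟨⟨⟩, fun j h => h.down ▸ s⟩
    have hp : HEq p (cast (congrArg (fun x => C.P i x j) hσ) p) :=
      (cast_heq _ p).symm
    have h := ICHom.π_heq M.unit_l i ⟨⟨⟩, fun j h => h.down ▸ s⟩ j p _ hp
    obtain ⟨h1, h2, h3⟩ := sigma_sigma_inj h
    exact h3.trans hp.symm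
  · -- mul_assoc
    intro i s s' s''
    exact ICHom.σ_eq M.mul_assoc i ⟨⟨s, s'⟩, fun k q => s'' q.1 q.2.1 k q.2.2⟩
  · -- up_assoc
    intro i s s' s'' l p p2 hp
    have h := ICHom.π_heq M.mul_assoc i
      ⟨⟨s, s'⟩, fun k q => s'' q.1 q.2.1 k q.2.2⟩ l p p2 hp
    obtain ⟨h1, h2, h3⟩ := sigma_sigma_inj h
    exact h1
  · -- ulup_up_assoc
    intro i s s' s'' l p p2 hp
    have h := ICHom.π_heq M.mul_assoc i
      ⟨⟨s, s'⟩, fun k q => s'' q.1 q.2.1 k q.2.2⟩ l p p2 hp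
    obtain ⟨h1, h2, h3⟩ := sigma_sigma_inj h
    exact (triple_heq_inj (R := fun a q k => C.P a (s' a q) k) h1 h2).1
  · -- ulul_ul_assoc
    intro i s s' s'' l p p2 hp
    have h := ICHom.π_heq M.mul_assoc i
      ⟨⟨s, s'⟩, fun k q => s'' q.1 q.2.1 k q.2.2⟩ l p p2 hp
    obtain ⟨h1, h2, h3⟩ := sigma_sigma_inj h
    exact (triple_heq_inj (R := fun a q k => C.P a (s' a q) k) h1 h2).2.1
  · -- ulur_urul_assoc
    intro i s s' s'' l p p2 hp
    have h := ICHom.π_heq M.mul_assoc i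
      ⟨⟨s, s'⟩, fun k q => s'' q.1 q.2.1 k q.2.2⟩ l p p2 hp
    obtain ⟨h1, h2, h3⟩ := sigma_sigma_inj h
    exact (triple_heq_inj (R := fun a q k => C.P a (s' a q) k) h1 h2).2.2
  · -- ur_urur_assoc
    intro i s s' s'' l p p2 hp
    have h := ICHom.π_heq M.mul_assoc i
      ⟨⟨s, s'⟩, fun k q => s'' q.1 q.2.1 k q.2.2⟩ l p p2 hp
    obtain ⟨h1, h2, h3⟩ := sigma_sigma_inj h
    exact h3

theorem monoid_unit_l (D : ICMSData C) (L : ICMSLaws C D) :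
    (tensorHom (ηOf D) (ICHom.id C)).comp (μOf D) = lamHom C := by
  apply ICHom.ext_het
  · intro i ss
    obtain ⟨u, f⟩ := ss
    obtain ⟨s0, rfl⟩ : ∃ s0, f = fun j h => h.down ▸ s0 := by
      refine ⟨f i ⟨rfl⟩, ?_⟩
      funext j h
      obtain ⟨hd⟩ := h
      subst hd
      rfl
    exact L.e_unit_r i s0
  · intro i ss j p p' hp
    obtain ⟨u, f⟩ := ss
    obtain ⟨s0, rfl⟩ : ∃ s0, f = fun j h => h.down ▸ s0 := by
      refine ⟨f i ⟨rfl⟩, ?_⟩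
      funext j h
      obtain ⟨hd⟩ := h
      subst hd
      rfl
    refine sigma_sigma_ext ?_ ?_ ?_
    · exact (D.Pe i (D.up i (D.e i) (D.sbar s0) j p)
        (D.ul i (D.e i) (D.sbar s0) j p)).symm
    · exact plift_prop_heq (by
        constructor <;> intro _ <;>
          first
          | exact D.Pe i (D.up i (D.e i) (D.sbar s0) j p)
              (D.ul i (D.e i) (D.sbar s0) j p)
          | exact (D.Pe i (D.up i (D.e i) (D.sbar s0) j p)
              (D.ul i (D.e i) (D.sbar s0) j p)).symm
          | rfl)
        _ _
    · exact (L.ur_unit_r i s0 j p).trans hp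

theorem monoid_unit_r (D : ICMSData C) (L : ICMSLaws C D) :
    (tensorHom (ICHom.id C) (ηOf D)).comp (μOf D) = rhoHom C := by
  apply ICHom.ext_het
  · intro i ss
    exact L.e_unit_l i ss.1
  · intro i ss j p p' hp
    refine sigma_sigma_ext ?_ ?_ ?_
    · exact D.Pe (D.up i ss.1 (D.eP ss.1) j p) j
        (D.ur i ss.1 (D.eP ss.1) j p)
    · exact (L.ul_unit_l i ss.1 j p).trans hp
    · exact plift_prop_heq (by
        constructor <;> intro _ <;>
          first
          | exact D.Pe (D.up i ss.1 (D.eP ss.1) j p) j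
              (D.ur i ss.1 (D.eP ss.1) j p)
          | exact (D.Pe (D.up i ss.1 (D.eP ss.1) j p) j
              (D.ur i ss.1 (D.eP ss.1) j p)).symm
          | rfl)
        _ _

theorem monoid_assoc (D : ICMSData C) (L : ICMSLaws C D) :
    (tensorHom (μOf D) (ICHom.id C)).comp (μOf D) =
      (assocHom C C C).comp ((tensorHom (ICHom.id C) (μOf D)).comp (μOf D)) := by
  apply ICHom.ext_het
  · intro i ss
    exact L.mul_assoc i ss.1.1 ss.1.2 (fun j q k r => ss.2 k ⟨j, q, r⟩)
  · intro i ss l p p' hp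
    refine sigma_sigma_ext ?_ (triple_heq_mk (R := fun a q k => C.P a (ss.1.2 a q) k) ?_ ?_ ?_ ?_) ?_
    · exact L.up_assoc i ss.1.1 ss.1.2 (fun j q k r => ss.2 k ⟨j, q, r⟩) l p p' hp
    · exact L.up_assoc i ss.1.1 ss.1.2 (fun j q k r => ss.2 k ⟨j, q, r⟩) l p p' hp
    · exact L.ulup_up_assoc i ss.1.1 ss.1.2 (fun j q k r => ss.2 k ⟨j, q, r⟩) l p p' hp
    · exact L.ulul_ul_assoc i ss.1.1 ss.1.2 (fun j q k r => ss.2 k ⟨j, q, r⟩) l p p' hp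
    · exact L.ulur_urul_assoc i ss.1.1 ss.1.2 (fun j q k r => ss.2 k ⟨j, q, r⟩) l p p' hp
    · exact L.ur_urur_assoc i ss.1.1 ss.1.2 (fun j q k r => ss.2 k ⟨j, q, r⟩) l p p' hp

/-- The monoid associated to an ICMS. -/
def monoidOf (M : ICMS C) : ICMonoid C where
  η := ηOf M.data
  μ := μOf M.data
  unit_l := monoid_unit_l M.data M.laws
  unit_r := monoid_unit_r M.data M.laws
  mul_assoc := monoid_assoc M.data M.laws

end Aux

/-- monoid structures on an indexed container in `(IC_I, I_c, ⊗)` are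
equivalent to indexed container monoid structures (ICMS). -/
theorem icmonoid_equiv_icms {I : Type} (C : ICont I) :
    Nonempty (ICMonoid C ≃ ICMS C) := by
  refine ⟨⟨fun M => ⟨dataOf M, lawsOf M⟩, monoidOf, fun M => rfl, fun M => rfl⟩⟩
end

section
/- Given two indexed containers equipped with ICMS structures, a container morphism f between them is a monoid morphism (with respect to the monoid structures induced via the equivalence between ICMS and monoids in IC_I) if and only if f satisfies the six ICMS-morphism equations hom-e, hom-Pe≡, hom-•, hom-↑, hom-↖, hom-↗. -/
variable {I : Type}

/-- The unit container morphism induced by ICMS data. -/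
def etaHom {I : Type} {C : ICont I} (M : ICMSData C) : ICHom (idC I) C where
  σ i _ := M.e i
  π i _ j p := ⟨M.Pe i j p⟩

/-- The multiplication container morphism induced by ICMS data. -/
def muHom {I : Type} {C : ICont I} (M : ICMSData C) : ICHom (tensorIC C C) C where
  σ i ss := M.mul i ss.1 ss.2
  π i ss j p := ⟨M.up i ss.1 ss.2 j p, M.ul i ss.1 ss.2 j p, M.ur i ss.1 ss.2 j p⟩

/-- `f` is a monoid morphism with respect to the monoid structures induced by the
ICMS data (via the equivalence between ICMS and monoids in `IC_I`). -/
def IsMonHom {I : Type} {C C' : ICont I} (M : ICMSData C) (M' : ICMSData C')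
    (f : ICHom C C') : Prop :=
  (etaHom M).comp f = etaHom M' ∧
  (muHom M).comp f = (tensorHom f f).comp (muHom M')

/-- The six ICMS-morphism equations `hom-e`, `hom-Pe≡`, `hom-•`, `hom-↑`, `hom-↖`,
`hom-↗`. -/
structure IsICMSHom {I : Type} {C C' : ICont I} (M : ICMSData C) (M' : ICMSData C')
    (f : ICHom C C') : Prop where
  hom_e : ∀ i, f.σ i (M.e i) = M'.e i
  hom_Pe : ∀ (i j : I) (p' : C'.P i (f.σ i (M.e i)) j) (p'' : C'.P i (M'.e i) j),
    HEq p' p'' → M.Pe i j (f.π i (M.e i) j p') = M'.Pe i j p''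
  hom_mul : ∀ (i : I) (s : C.S i) (v : ∀ j, C.P i s j → C.S j),
    M'.mul i (f.σ i s) (fun j p' => f.σ j (v j (f.π i s j p'))) =
      f.σ i (M.mul i s v)
  hom_up : ∀ (i : I) (s : C.S i) (v : ∀ j, C.P i s j → C.S j) (j : I)
    (p : C'.P i (f.σ i (M.mul i s v)) j)
    (p₂ : C'.P i (M'.mul i (f.σ i s) (fun j p' => f.σ j (v j (f.π i s j p')))) j),
    HEq p₂ p →
    M'.up i (f.σ i s) (fun j p' => f.σ j (v j (f.π i s j p'))) j p₂ =
      M.up i s v j (f.π i (M.mul i s v) j p)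
  hom_ul : ∀ (i : I) (s : C.S i) (v : ∀ j, C.P i s j → C.S j) (j : I)
    (p : C'.P i (f.σ i (M.mul i s v)) j)
    (p₂ : C'.P i (M'.mul i (f.σ i s) (fun j p' => f.σ j (v j (f.π i s j p')))) j),
    HEq p₂ p →
    HEq (f.π i s (M'.up i (f.σ i s) (fun j p' => f.σ j (v j (f.π i s j p'))) j p₂)
          (M'.ul i (f.σ i s) (fun j p' => f.σ j (v j (f.π i s j p'))) j p₂))
        (M.ul i s v j (f.π i (M.mul i s v) j p))
  hom_ur : ∀ (i : I) (s : C.S i) (v : ∀ j, C.P i s j → C.S j) (j : I)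
    (p : C'.P i (f.σ i (M.mul i s v)) j)
    (p₂ : C'.P i (M'.mul i (f.σ i s) (fun j p' => f.σ j (v j (f.π i s j p')))) j),
    HEq p₂ p →
    HEq (f.π (M'.up i (f.σ i s) (fun j p' => f.σ j (v j (f.π i s j p'))) j p₂)
          (v (M'.up i (f.σ i s) (fun j p' => f.σ j (v j (f.π i s j p'))) j p₂)
            (f.π i s (M'.up i (f.σ i s) (fun j p' => f.σ j (v j (f.π i s j p'))) j p₂)
              (M'.ul i (f.σ i s) (fun j p' => f.σ j (v j (f.π i s j p'))) j p₂))) j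
          (M'.ur i (f.σ i s) (fun j p' => f.σ j (v j (f.π i s j p'))) j p₂))
        (M.ur i s v j (f.π i (M.mul i s v) j p))

section AuxLemmas

private lemma ICHom.ext' {I : Type} {C D : ICont I} {f g : ICHom C D}
    (h1 : f.σ = g.σ) (h2 : HEq f.π g.π) : f = g := by
  cases f; cases g
  simp only at h1 h2
  cases h1; cases h2; rfl

private lemma myPiCongr {I : Type} {C D : ICont I} {f g : ICHom C D} (h : f = g)
    (i : I) (s : C.S i) (j : I) (p : D.P i (f.σ i s) j) (p' : D.P i (g.σ i s) j)
    (hp : HEq p p') : f.π i s j p = g.π i s j p' := by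
  subst h; cases hp; rfl

private lemma triple_eq_intro {A : Type} {B : A → Type} {Cf : ∀ a, B a → Type}
    {a a' : A} {b : B a} {b' : B a'} {c : Cf a b} {c' : Cf a' b'}
    (h : a = a') (hb : HEq b b') (hc : HEq c c') :
    (⟨a, b, c⟩ : Σ x : A, Σ y : B x, Cf x y) = ⟨a', b', c'⟩ := by
  subst h; cases hb; cases hc; rfl

private lemma triple_eq_elim {A : Type} {B : A → Type} {Cf : ∀ a, B a → Type}
    {a a' : A} {b : B a} {b' : B a'} {c : Cf a b} {c' : Cf a' b'}
    (h : (⟨a, b, c⟩ : Σ x : A, Σ y : B x, Cf x y) = ⟨a', b', c'⟩) :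
    a = a' ∧ HEq b b' ∧ HEq c c' := by
  injection h with h1 h2
  subst h1
  have h2' := eq_of_heq h2
  injection h2' with h3 h4
  subst h3
  exact ⟨rfl, HEq.rfl, h4⟩

end AuxLemmas

/-- a container morphism between containers equipped with ICMS
structures is a monoid morphism (for the induced monoid structures) if and only if
it satisfies the six ICMS-morphism equations. -/


theorem monHom_iff_icmsHom {I : Type} {C C' : ICont I}
    (M : ICMS C) (M' : ICMS C') (f : ICHom C C') :
    IsMonHom M.data M'.data f ↔ IsICMSHom M.data M'.data f := by
  constructor
  · rintro ⟨h1, h2⟩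
    have hσ2 := congrArg ICHom.σ h2
    refine ⟨?_, ?_, ?_, ?_, ?_, ?_⟩
    · intro i
      exact congrFun (congrFun (congrArg ICHom.σ h1) i) ()
    · intro i j p' p'' _
      rfl
    · intro i s v
      exact (congrFun (congrFun hσ2 i) ⟨s, v⟩).symm
    · intro i s v j p p₂ hp
      have L := myPiCongr h2 i ⟨s, v⟩ j p p₂ hp.symm
      exact ((triple_eq_elim (Cf := fun a y => C.P a (v a y) j) L).1).symm
    · intro i s v j p p₂ hp
      have L := myPiCongr h2 i ⟨s, v⟩ j p p₂ hp.symm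
      exact ((triple_eq_elim (Cf := fun a y => C.P a (v a y) j) L).2.1).symm
    · intro i s v j p p₂ hp
      have L := myPiCongr h2 i ⟨s, v⟩ j p p₂ hp.symm
      exact ((triple_eq_elim (Cf := fun a y => C.P a (v a y) j) L).2.2).symm
  · intro h
    constructor
    · apply ICHom.ext'
      · funext i u
        exact h.hom_e i
      · apply Function.hfunext rfl
        intro i i' hi; cases hi
        apply Function.hfunext rfl
        intro u u' hu; cases hu
        apply Function.hfunext rfl
        intro j j' hj; cases hj
        apply Function.hfunext (congrArg (fun s0 => C'.P i s0 j) (h.hom_e i))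
        intro p p' hp
        exact heq_of_eq rfl
    · apply ICHom.ext'
      · funext i ss
        obtain ⟨s, v⟩ := ss
        exact (h.hom_mul i s v).symm
      · apply Function.hfunext rfl
        intro i i' hi; cases hi
        apply Function.hfunext rfl
        intro ss ss' hss; cases hss
        obtain ⟨s, v⟩ := ss
        apply Function.hfunext rfl
        intro j j' hj; cases hj
        apply Function.hfunext
          (congrArg (fun s0 => C'.P i s0 j) (h.hom_mul i s v).symm)
        intro p p₂ hp
        exact heq_of_eq (triple_eq_intro (Cf := fun a y => C.P a (v a y) j)
          (h.hom_up i s v j p p₂ hp.symm).symm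
          (h.hom_ul i s v j p p₂ hp.symm).symm
          (h.hom_ur i s v j p p₂ hp.symm).symm)
end

section
/- ICMS structures are closed under products of indexed containers: given ICMS structures on (S⁰ ◁ P⁰) and (S¹ ◁ P¹), the product container with shapes S i := S⁰ i × S¹ i and positions P i (s₀, s₁) j := P⁰ i s₀ j ⊕ P¹ i s₁ j carries an ICMS structure with unit e i := (e⁰ i, e¹ i), multiplication (s₀, s₁) • s' := (s₀ •⁰ (inl-restriction of s'), s₁ •¹ (inr-restriction of s')), and ↑, ↖, ↗ given componentwise by case analysis on the sum. -/
variable {I : Type}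

/-- The product of two indexed containers. -/
def prodCont {I : Type} (C D : ICont I) : ICont I :=
  ⟨fun i => C.S i × D.S i, fun i s j => C.P i s.1 j ⊕ D.P i s.2 j⟩

/-- The ICMS data on the product container, defined componentwise. -/
def prodData {I : Type} {C D : ICont I} (M₀ : ICMSData C) (M₁ : ICMSData D) :
    ICMSData (prodCont C D) where
  e i := (M₀.e i, M₁.e i)
  mul i s s' :=
    (M₀.mul i s.1 (fun j p => (s' j (.inl p)).1),
     M₁.mul i s.2 (fun j p => (s' j (.inr p)).2))
  Pe i j p :=
    match p with
    | .inl p => M₀.Pe i j p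
    | .inr p => M₁.Pe i j p
  up i s s' j p :=
    match p with
    | .inl p => M₀.up i s.1 (fun j p => (s' j (.inl p)).1) j p
    | .inr p => M₁.up i s.2 (fun j p => (s' j (.inr p)).2) j p
  ul i s s' j p :=
    match p with
    | .inl p => .inl (M₀.ul i s.1 (fun j p => (s' j (.inl p)).1) j p)
    | .inr p => .inr (M₁.ul i s.2 (fun j p => (s' j (.inr p)).2) j p)
  ur i s s' j p :=
    match p with
    | .inl p => .inl (M₀.ur i s.1 (fun j p => (s' j (.inl p)).1) j p)
    | .inr p => .inr (M₁.ur i s.2 (fun j p => (s' j (.inr p)).2) j p)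


section ProdICMSHelpers

private lemma heq_inl {A A' B B' : Type} (hB : B = B') {a : A} {a' : A'}
    (h : HEq a a') : HEq (Sum.inl a : A ⊕ B) (Sum.inl a' : A' ⊕ B') := by
  have hA := type_eq_of_heq h
  subst hA; subst hB; cases eq_of_heq h; rfl

private lemma heq_inr {A A' B B' : Type} (hA : A = A') {b : B} {b' : B'}
    (h : HEq b b') : HEq (Sum.inr b : A ⊕ B) (Sum.inr b' : A' ⊕ B') := by
  have hB := type_eq_of_heq h
  subst hA; subst hB; cases eq_of_heq h; rfl

private lemma sum_heq_inl {A A' B B' : Type} (hA : A = A') (hB : B = B')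
    {a : A} {y : A' ⊕ B'} (h : HEq (Sum.inl a : A ⊕ B) y) :
    ∃ a', y = Sum.inl a' ∧ HEq a a' := by
  subst hA; subst hB; cases eq_of_heq h; exact ⟨a, rfl, HEq.rfl⟩

private lemma sum_heq_inr {A A' B B' : Type} (hA : A = A') (hB : B = B')
    {b : B} {y : A' ⊕ B'} (h : HEq (Sum.inr b : A ⊕ B) y) :
    ∃ b', y = Sum.inr b' ∧ HEq b b' := by
  subst hA; subst hB; cases eq_of_heq h; exact ⟨b, rfl, HEq.rfl⟩

private lemma Pcongr {I : Type} (E : ICont I) {k k' : I} (hk : k = k')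
    {t : E.S k} {t' : E.S k'} (ht : HEq t t') {l l' : I} (hl : l = l') :
    E.P k t l = E.P k' t' l' := by
  subst hk; subst hl; cases eq_of_heq ht; rfl

private lemma hcongr2 {κ : Type} {A : κ → Type} {R : ∀ k, A k → Type}
    (f : ∀ k (a : A k), R k a) {k k' : κ} (hk : k = k') {a : A k} {a' : A k'}
    (ha : HEq a a') : HEq (f k a) (f k' a') := by
  subst hk; cases eq_of_heq ha; rfl

private lemma hcongr4 {κ : Type} {A : κ → Type} {B : ∀ k, A k → κ → Type}
    {R : κ → Type} (f : ∀ k (a : A k) (l : κ) (b : B k a l), R l)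
    {k k' : κ} (hk : k = k') {a : A k} {a' : A k'} (ha : HEq a a')
    {l l' : κ} (hl : l = l') {b : B k a l} {b' : B k' a' l'} (hb : HEq b b') :
    HEq (f k a l b) (f k' a' l' b') := by
  subst hk; subst hl; cases eq_of_heq ha; cases eq_of_heq hb; rfl

private lemma fst_hcongr {I : Type} {A B : I → Type} {k k' : I} (hk : k = k')
    {x : A k × B k} {y : A k' × B k'} (h : HEq x y) : HEq x.1 y.1 := by
  subst hk; cases eq_of_heq h; rfl

private lemma snd_hcongr {I : Type} {A B : I → Type} {k k' : I} (hk : k = k')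
    {x : A k × B k} {y : A k' × B k'} (h : HEq x y) : HEq x.2 y.2 := by
  subst hk; cases eq_of_heq h; rfl

private lemma cast_fst {I : Type} {A B : I → Type} {i j : I} (h : i = j)
    (s : A i × B i) : (h ▸ s : A j × B j).1 = (h ▸ s.1 : A j) := by
  cases h; rfl

private lemma cast_snd {I : Type} {A B : I → Type} {i j : I} (h : i = j)
    (s : A i × B i) : (h ▸ s : A j × B j).2 = (h ▸ s.2 : B j) := by
  cases h; rfl

private lemma P_fst_cast {I : Type} {B : I → Type} (Cc : ICont I) {i X : I}
    (h : i = X) (s : Cc.S i × B i) (j : I) :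
    Cc.P X ((h ▸ s : Cc.S X × B X).1) j = Cc.P i s.1 j := by cases h; rfl

private lemma P_snd_cast {I : Type} {A : I → Type} (Dc : ICont I) {i X : I}
    (h : i = X) (s : A i × Dc.S i) (j : I) :
    Dc.P X ((h ▸ s : A X × Dc.S X).2) j = Dc.P i s.2 j := by cases h; rfl

end ProdICMSHelpers

/-- ICMS structures are closed under products of indexed containers. -/


theorem prod_icms {I : Type} {C D : ICont I} (M₀ : ICMSData C) (M₁ : ICMSData D)
    (h₀ : ICMSLaws C M₀) (h₁ : ICMSLaws D M₁) :
    ICMSLaws (prodCont C D) (prodData M₀ M₁) := by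
  constructor
  · -- e_unit_l
    intro i s
    exact Prod.ext (h₀.e_unit_l i s.1) (h₁.e_unit_l i s.2)
  · -- ul_unit_l
    intro i s j p
    cases p with
    | inl a =>
      have hX : M₀.up i s.1 (fun k _ => M₀.e k) j a = j :=
        M₀.Pe _ j (M₀.ur i s.1 (fun k _ => M₀.e k) j a)
      exact heq_inl ((congrArg (D.P i s.2) hX).trans
          (congrArg (fun x => D.P i x j) (h₁.e_unit_l i s.2).symm))
        (h₀.ul_unit_l i s.1 j a)
    | inr a =>
      have hX : M₁.up i s.2 (fun k _ => M₁.e k) j a = j :=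
        M₁.Pe _ j (M₁.ur i s.2 (fun k _ => M₁.e k) j a)
      exact heq_inr ((congrArg (C.P i s.1) hX).trans
          (congrArg (fun x => C.P i x j) (h₀.e_unit_l i s.1).symm))
        (h₁.ul_unit_l i s.2 j a)
  · -- e_unit_r
    intro i s
    have hf0 : (fun j p => (((prodData M₀ M₁).sbar s) j (Sum.inl p)).1) = M₀.sbar s.1 :=
      funext fun j => funext fun p => cast_fst (M₀.Pe i j p) s
    have hf1 : (fun j p => (((prodData M₀ M₁).sbar s) j (Sum.inr p)).2) = M₁.sbar s.2 :=
      funext fun j => funext fun p => cast_snd (M₁.Pe i j p) s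
    have t0 := h₀.e_unit_r i s.1
    have t1 := h₁.e_unit_r i s.2
    rw [← hf0] at t0
    rw [← hf1] at t1
    exact Prod.ext t0 t1
  · -- ur_unit_r
    intro i s j p
    have hf0 : (fun j p => (((prodData M₀ M₁).sbar s) j (Sum.inl p)).1) = M₀.sbar s.1 :=
      funext fun j => funext fun p => cast_fst (M₀.Pe i j p) s
    have hf1 : (fun j p => (((prodData M₀ M₁).sbar s) j (Sum.inr p)).2) = M₁.sbar s.2 :=
      funext fun j => funext fun p => cast_snd (M₁.Pe i j p) s
    have t0 := h₀.ur_unit_r i s.1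
    have t1 := h₁.ur_unit_r i s.2
    have u0 := h₀.e_unit_r i s.1
    have u1 := h₁.e_unit_r i s.2
    rw [← hf0] at t0 u0
    rw [← hf1] at t1 u1
    cases p with
    | inl a =>
      refine heq_inl ?_ (t0 j a)
      exact (P_snd_cast D
        ((prodData M₀ M₁).Pe i _ ((prodData M₀ M₁).ul i ((prodData M₀ M₁).e i)
          ((prodData M₀ M₁).sbar s) j (Sum.inl a))) s j).trans
        (congrArg (fun x => D.P i x j) u1.symm)
    | inr a =>
      refine heq_inr ?_ (t1 j a)
      exact (P_fst_cast C
        ((prodData M₀ M₁).Pe i _ ((prodData M₀ M₁).ul i ((prodData M₀ M₁).e i)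
          ((prodData M₀ M₁).sbar s) j (Sum.inr a))) s j).trans
        (congrArg (fun x => C.P i x j) u0.symm)
  · -- mul_assoc
    intro i s s' s''
    exact Prod.ext
      (h₀.mul_assoc i s.1 (fun k q => (s' k (Sum.inl q)).1)
        (fun k q l r => (s'' k (Sum.inl q) l (Sum.inl r)).1))
      (h₁.mul_assoc i s.2 (fun k q => (s' k (Sum.inr q)).2)
        (fun k q l r => (s'' k (Sum.inr q) l (Sum.inr r)).2))
  · -- up_assoc
    intro i s s' s'' j p p₂ hp
    have hA := congrArg (fun x => C.P i x j)
      (h₀.mul_assoc i s.1 (fun k q => (s' k (Sum.inl q)).1)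
        (fun k q l r => (s'' k (Sum.inl q) l (Sum.inl r)).1))
    have hB := congrArg (fun x => D.P i x j)
      (h₁.mul_assoc i s.2 (fun k q => (s' k (Sum.inr q)).2)
        (fun k q l r => (s'' k (Sum.inr q) l (Sum.inr r)).2))
    cases p with
    | inl a =>
      obtain ⟨a', rfl, ha⟩ := sum_heq_inl hA hB hp
      exact h₀.up_assoc i s.1 (fun k q => (s' k (Sum.inl q)).1)
        (fun k q l r => (s'' k (Sum.inl q) l (Sum.inl r)).1) j a a' ha
    | inr a =>
      obtain ⟨a', rfl, ha⟩ := sum_heq_inr hA hB hp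
      exact h₁.up_assoc i s.2 (fun k q => (s' k (Sum.inr q)).2)
        (fun k q l r => (s'' k (Sum.inr q) l (Sum.inr r)).2) j a a' ha
  · -- ulup_up_assoc
    intro i s s' s'' j p p₂ hp
    have hA := congrArg (fun x => C.P i x j)
      (h₀.mul_assoc i s.1 (fun k q => (s' k (Sum.inl q)).1)
        (fun k q l r => (s'' k (Sum.inl q) l (Sum.inl r)).1))
    have hB := congrArg (fun x => D.P i x j)
      (h₁.mul_assoc i s.2 (fun k q => (s' k (Sum.inr q)).2)
        (fun k q l r => (s'' k (Sum.inr q) l (Sum.inr r)).2))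
    cases p with
    | inl a =>
      obtain ⟨a', rfl, ha⟩ := sum_heq_inl hA hB hp
      exact h₀.ulup_up_assoc i s.1 (fun k q => (s' k (Sum.inl q)).1)
        (fun k q l r => (s'' k (Sum.inl q) l (Sum.inl r)).1) j a a' ha
    | inr a =>
      obtain ⟨a', rfl, ha⟩ := sum_heq_inr hA hB hp
      exact h₁.ulup_up_assoc i s.2 (fun k q => (s' k (Sum.inr q)).2)
        (fun k q l r => (s'' k (Sum.inr q) l (Sum.inr r)).2) j a a' ha
  · -- ulul_ul_assoc
    intro i s s' s'' j p p₂ hp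
    have hA := congrArg (fun x => C.P i x j)
      (h₀.mul_assoc i s.1 (fun k q => (s' k (Sum.inl q)).1)
        (fun k q l r => (s'' k (Sum.inl q) l (Sum.inl r)).1))
    have hB := congrArg (fun x => D.P i x j)
      (h₁.mul_assoc i s.2 (fun k q => (s' k (Sum.inr q)).2)
        (fun k q l r => (s'' k (Sum.inr q) l (Sum.inr r)).2))
    cases p with
    | inl a =>
      obtain ⟨a', rfl, ha⟩ := sum_heq_inl hA hB hp
      exact heq_inl
        (congrArg (D.P i s.2)
          (h₀.ulup_up_assoc i s.1 (fun k q => (s' k (Sum.inl q)).1)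
            (fun k q l r => (s'' k (Sum.inl q) l (Sum.inl r)).1) j a a' ha))
        (h₀.ulul_ul_assoc i s.1 (fun k q => (s' k (Sum.inl q)).1)
          (fun k q l r => (s'' k (Sum.inl q) l (Sum.inl r)).1) j a a' ha)
    | inr a =>
      obtain ⟨a', rfl, ha⟩ := sum_heq_inr hA hB hp
      exact heq_inr
        (congrArg (C.P i s.1)
          (h₁.ulup_up_assoc i s.2 (fun k q => (s' k (Sum.inr q)).2)
            (fun k q l r => (s'' k (Sum.inr q) l (Sum.inr r)).2) j a a' ha))
        (h₁.ulul_ul_assoc i s.2 (fun k q => (s' k (Sum.inr q)).2)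
          (fun k q l r => (s'' k (Sum.inr q) l (Sum.inr r)).2) j a a' ha)
  · -- ulur_urul_assoc
    intro i s s' s'' j p p₂ hp
    have hA := congrArg (fun x => C.P i x j)
      (h₀.mul_assoc i s.1 (fun k q => (s' k (Sum.inl q)).1)
        (fun k q l r => (s'' k (Sum.inl q) l (Sum.inl r)).1))
    have hB := congrArg (fun x => D.P i x j)
      (h₁.mul_assoc i s.2 (fun k q => (s' k (Sum.inr q)).2)
        (fun k q l r => (s'' k (Sum.inr q) l (Sum.inr r)).2))
    cases p with
    | inl a =>
      obtain ⟨a', rfl, ha⟩ := sum_heq_inl hA hB hp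
      have e1 := h₀.ulup_up_assoc i s.1 (fun k q => (s' k (Sum.inl q)).1)
        (fun k q l r => (s'' k (Sum.inl q) l (Sum.inl r)).1) j a a' ha
      have e2 := heq_inl (congrArg (D.P i s.2) e1)
        (h₀.ulul_ul_assoc i s.1 (fun k q => (s' k (Sum.inl q)).1)
          (fun k q l r => (s'' k (Sum.inl q) l (Sum.inl r)).1) j a a' ha)
      have e4 := snd_hcongr (A := C.S) (B := D.S) e1 (hcongr2 s' e1 e2)
      have e5 := h₀.up_assoc i s.1 (fun k q => (s' k (Sum.inl q)).1)
        (fun k q l r => (s'' k (Sum.inl q) l (Sum.inl r)).1) j a a' ha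
      exact heq_inl (Pcongr D e1 e4 e5)
        (h₀.ulur_urul_assoc i s.1 (fun k q => (s' k (Sum.inl q)).1)
          (fun k q l r => (s'' k (Sum.inl q) l (Sum.inl r)).1) j a a' ha)
    | inr a =>
      obtain ⟨a', rfl, ha⟩ := sum_heq_inr hA hB hp
      have e1 := h₁.ulup_up_assoc i s.2 (fun k q => (s' k (Sum.inr q)).2)
        (fun k q l r => (s'' k (Sum.inr q) l (Sum.inr r)).2) j a a' ha
      have e2 := heq_inr (congrArg (C.P i s.1) e1)
        (h₁.ulul_ul_assoc i s.2 (fun k q => (s' k (Sum.inr q)).2)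
          (fun k q l r => (s'' k (Sum.inr q) l (Sum.inr r)).2) j a a' ha)
      have e4 := fst_hcongr (A := C.S) (B := D.S) e1 (hcongr2 s' e1 e2)
      have e5 := h₁.up_assoc i s.2 (fun k q => (s' k (Sum.inr q)).2)
        (fun k q l r => (s'' k (Sum.inr q) l (Sum.inr r)).2) j a a' ha
      exact heq_inr (Pcongr C e1 e4 e5)
        (h₁.ulur_urul_assoc i s.2 (fun k q => (s' k (Sum.inr q)).2)
          (fun k q l r => (s'' k (Sum.inr q) l (Sum.inr r)).2) j a a' ha)
  · -- ur_urur_assoc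
    intro i s s' s'' j p p₂ hp
    have hA := congrArg (fun x => C.P i x j)
      (h₀.mul_assoc i s.1 (fun k q => (s' k (Sum.inl q)).1)
        (fun k q l r => (s'' k (Sum.inl q) l (Sum.inl r)).1))
    have hB := congrArg (fun x => D.P i x j)
      (h₁.mul_assoc i s.2 (fun k q => (s' k (Sum.inr q)).2)
        (fun k q l r => (s'' k (Sum.inr q) l (Sum.inr r)).2))
    cases p with
    | inl a =>
      obtain ⟨a', rfl, ha⟩ := sum_heq_inl hA hB hp
      have e1 := h₀.ulup_up_assoc i s.1 (fun k q => (s' k (Sum.inl q)).1)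
        (fun k q l r => (s'' k (Sum.inl q) l (Sum.inl r)).1) j a a' ha
      have e2 := heq_inl (congrArg (D.P i s.2) e1)
        (h₀.ulul_ul_assoc i s.1 (fun k q => (s' k (Sum.inl q)).1)
          (fun k q l r => (s'' k (Sum.inl q) l (Sum.inl r)).1) j a a' ha)
      have e4 := snd_hcongr (A := C.S) (B := D.S) e1 (hcongr2 s' e1 e2)
      have e5 := h₀.up_assoc i s.1 (fun k q => (s' k (Sum.inl q)).1)
        (fun k q l r => (s'' k (Sum.inl q) l (Sum.inl r)).1) j a a' ha
      have e6 := heq_inl (Pcongr D e1 e4 e5)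
        (h₀.ulur_urul_assoc i s.1 (fun k q => (s' k (Sum.inl q)).1)
          (fun k q l r => (s'' k (Sum.inl q) l (Sum.inl r)).1) j a a' ha)
      have e7 := hcongr4 s'' e1 e2 e5 e6
      exact heq_inl (Pcongr D e5 (snd_hcongr (A := C.S) (B := D.S) e5 e7) rfl)
        (h₀.ur_urur_assoc i s.1 (fun k q => (s' k (Sum.inl q)).1)
          (fun k q l r => (s'' k (Sum.inl q) l (Sum.inl r)).1) j a a' ha)
    | inr a =>
      obtain ⟨a', rfl, ha⟩ := sum_heq_inr hA hB hp
      have e1 := h₁.ulup_up_assoc i s.2 (fun k q => (s' k (Sum.inr q)).2)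
        (fun k q l r => (s'' k (Sum.inr q) l (Sum.inr r)).2) j a a' ha
      have e2 := heq_inr (congrArg (C.P i s.1) e1)
        (h₁.ulul_ul_assoc i s.2 (fun k q => (s' k (Sum.inr q)).2)
          (fun k q l r => (s'' k (Sum.inr q) l (Sum.inr r)).2) j a a' ha)
      have e4 := fst_hcongr (A := C.S) (B := D.S) e1 (hcongr2 s' e1 e2)
      have e5 := h₁.up_assoc i s.2 (fun k q => (s' k (Sum.inr q)).2)
        (fun k q l r => (s'' k (Sum.inr q) l (Sum.inr r)).2) j a a' ha
      have e6 := heq_inr (Pcongr C e1 e4 e5)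
        (h₁.ulur_urul_assoc i s.2 (fun k q => (s' k (Sum.inr q)).2)
          (fun k q l r => (s'' k (Sum.inr q) l (Sum.inr r)).2) j a a' ha)
      have e7 := hcongr4 s'' e1 e2 e5 e6
      exact heq_inr (Pcongr C e5 (fst_hcongr (A := C.S) (B := D.S) e5 e7) rfl)
        (h₁.ur_urur_assoc i s.2 (fun k q => (s' k (Sum.inr q)).2)
          (fun k q l r => (s'' k (Sum.inr q) l (Sum.inr r)).2) j a a' ha)
end

section
/- The indexed state container carries an ICMS: with shapes S i := E i → Σ (j : I), E j and positions P i s j := Σ (e : E i), (s e).1 = j, the data e i := λ e. (i, e); (s • s') := λ e. s' (s e).1 (e, refl) (s e).2; Pe≡ (e, p) := p; ↑ (e, _) := (s e).1; ↖ (e, _) := (e, refl); ↗ (e, p) := ((s e).2, p) satisfies all the ICMS unit and associativity equations. -/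
variable {I : Type}

/-- The indexed state container. -/
def stateCont {I : Type} (E : I → Type) : ICont I :=
  ⟨fun i => E i → Σ j : I, E j, fun i s j => {e : E i // (s e).1 = j}⟩

/-- The ICMS data on the indexed state container. -/
def stateData {I : Type} (E : I → Type) : ICMSData (stateCont E) where
  e i := fun x => ⟨i, x⟩
  mul _i s s' := fun x => s' (s x).1 ⟨x, rfl⟩ (s x).2
  Pe _i _j p := p.2
  up _i s _s' _j p := (s p.1).1
  ul _i _s _s' _j p := ⟨p.1, rfl⟩
  ur _i s _s' _j p := ⟨(s p.1).2, p.2⟩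

/-- the indexed state container carries an ICMS. -/
theorem state_icms {I : Type} (E : I → Type) :
    ICMSLaws (stateCont E) (stateData E) := by
  constructor
  · intro i s; rfl
  · intro i s j p; obtain ⟨x, h⟩ := p; subst h; exact HEq.rfl
  · intro i s; rfl
  · intro i s j p; exact HEq.rfl
  · intro i s s' s''; rfl
  all_goals
    intro i s s' s'' j p p₂ h
    have h' : p = p₂ := eq_of_heq h
    subst h'
    obtain ⟨x, hx⟩ := p
    subst hx
    rfl
end

section
/- Given a monoid (W, ε, ·) acting on a set I via a monoid homomorphism ▶ into endofunctions of I, the indexed writer container with shapes S i := W and positions P i w j := (w ▶ i = j) carries an ICMS with e i := ε, w • w' := w · (w' (w ▶ i) refl) — where w' : ∀ j, (w ▶ i = j) → W — and with Pe≡ given by the preservation of ε by ▶, ↑ p := w ▶ i, ↖ p := refl, and ↗ given by preservation of · by ▶; the ICMS equations follow from the monoid axioms of W and the action laws. -/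
variable {I : Type}

/-- The indexed writer container for a monoid `W` acting on `I`:
shapes `S i := W`, positions `P i w j := (w ▶ i = j)`. -/
def writerCont {I : Type} (W : Type) (act : W → I → I) : ICont I :=
  ⟨fun _ => W, fun i w j => PLift (act w i = j)⟩

/-- The ICMS data on the indexed writer container, for a monoid `W` acting on `I`
via a monoid homomorphism into endofunctions of `I`. -/
def writerData {I : Type} (W : Type) [Monoid W] (act : W → I → I)
    (h1 : ∀ i, act 1 i = i)
    (hmul : ∀ (w w' : W) (i : I), act (w * w') i = act w' (act w i)) :
    ICMSData (writerCont W act) where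
  e _ := (1 : W)
  mul i w w' := (show W from w) * (show W from w' (act w i) ⟨rfl⟩)
  Pe i _j p := (h1 i).symm.trans p.down
  up i w _w' _j _p := act w i
  ul _i _w _w' _j _p := ⟨rfl⟩
  ur i w w' _j p := ⟨(hmul w (w' (act w i) ⟨rfl⟩) i).symm.trans p.down⟩

/-! Positions of the writer container are (lifted) proofs of equations in `I`, so any two
positions are heterogeneously equal as soon as their types are inhabited; the position
coherences therefore reduce to proof irrelevance, and only the shape equations use the
monoid laws of `W` (with `hmul` to align the index at which `s''` is evaluated). -/

theorem plift_heq {p q : Prop} (a : PLift p) (b : PLift q) : HEq a b :=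
  Subsingleton.helim (congrArg PLift (propext ⟨fun _ => b.down, fun _ => a.down⟩)) a b

theorem plift_family_congr {ι β : Sort*} {P : ι → Prop} (f : ∀ i, PLift (P i) → β)
    {i i' : ι} (h : i = i') (p : PLift (P i)) (p' : PLift (P i')) : f i p = f i' p' := by
  subst h; exact congrArg (f i) (Subsingleton.elim p p')

section Writer

variable {I : Type} (W : Type) [Monoid W] (act : W → I → I) (h1 : ∀ i, act 1 i = i)
  (hmul : ∀ (w w' : W) (i : I), act (w * w') i = act w' (act w i))

theorem writerData_mul_sbar (i : I) (s : W) :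
    (writerData W act h1 hmul).mul i ((writerData W act h1 hmul).e i)
      ((writerData W act h1 hmul).sbar s) = s :=
  (one_mul (M := W) _).trans (eq_rec_constant s _)

theorem writerData_mul_assoc (i : I) (s : W) (s' : ∀ j, PLift (act s i = j) → W)
    (s'' : ∀ (k : I) (q : PLift (act s i = k)) (l : I), PLift (act (s' k q) k = l) → W) :
    (writerData W act h1 hmul).mul i ((writerData W act h1 hmul).mul i s s')
        ((writerData W act h1 hmul).smoosh s s' s'') =
      (writerData W act h1 hmul).mul i s ((writerData W act h1 hmul).mulP s s' s'') := by
  show s * s' (act s i) ⟨rfl⟩ * _ = s * (s' (act s i) ⟨rfl⟩ * _)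
  rw [mul_assoc]
  exact congrArg _ (congrArg _
    (plift_family_congr (s'' (act s i) ⟨rfl⟩) (hmul s (s' (act s i) ⟨rfl⟩) i) _ _))

end Writer

/-- the indexed writer container carries an ICMS whose equations
follow from the monoid axioms of `W` and the action laws. -/
theorem writer_icms {I : Type} (W : Type) [Monoid W] (act : W → I → I)
    (h1 : ∀ i, act 1 i = i)
    (hmul : ∀ (w w' : W) (i : I), act (w * w') i = act w' (act w i)) :
    ICMSLaws (writerCont W act) (writerData W act h1 hmul) := by
  exact
  { e_unit_l := fun _ s => mul_one (show W from s)
    ul_unit_l := fun _ _ _ _ => plift_heq _ _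
    e_unit_r := writerData_mul_sbar W act h1 hmul
    ur_unit_r := fun _ _ _ _ => plift_heq _ _
    mul_assoc := writerData_mul_assoc W act h1 hmul
    up_assoc := fun i s s' _ _ _ _ _ => hmul s (s' (act s i) ⟨rfl⟩) i
    ulup_up_assoc := fun _ _ _ _ _ _ _ _ => rfl
    ulul_ul_assoc := fun _ _ _ _ _ _ _ _ => plift_heq _ _
    ulur_urul_assoc := fun _ _ _ _ _ _ _ _ => plift_heq _ _
    ur_urur_assoc := fun _ _ _ _ _ _ _ _ => plift_heq _ _ }
end

section
/- The shape substitution operation of the well-scoped λ-term ICMS is associative: for any shape M : S n, σ : ∀ m, P n M m → S m, and τ : ∀ k (q : P n M k), (∀ ℓ, P k (σ k q) ℓ → S ℓ), one has (M • σ) • ⟨τ⟩ = M • (λ k q. σ k q • τ k q), where ⟨τ⟩ ℓ r := τ (↑ r) (↖ r) ℓ (↗ r), proved by structural induction on M. -/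
/-- Shapes of the well-scoped λ-term container: an inductive family over ℕ. -/
inductive Tm : ℕ → Type where
  | var : ∀ {n}, Tm n
  | app : ∀ {n}, Tm n → Tm n → Tm n
  | lam : ∀ {n}, Tm (n + 1) → Tm n

/-- Positions, defined by recursion on the shape. -/
def Pos : ∀ {n : ℕ}, Tm n → ℕ → Type
  | n, .var, m => PLift (n = m)
  | _, .app M N, m => Pos M m ⊕ Pos N m
  | _, .lam M, m => Pos M m

/-- Shape substitution (the multiplication on shapes). -/
def subst : ∀ {n : ℕ} (M : Tm n), (∀ m, Pos M m → Tm m) → Tm n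
  | n, .var, σ => σ n ⟨rfl⟩
  | _, .app M N, σ =>
      .app (subst M (fun m p => σ m (.inl p))) (subst N (fun m p => σ m (.inr p)))
  | _, .lam M, σ => .lam (subst M σ)

/-- The index `↑ p` of the outer position, by structural recursion on the shape. -/
def upT : ∀ {n : ℕ} (M : Tm n) (σ : ∀ m, Pos M m → Tm m) (j : ℕ),
    Pos (subst M σ) j → ℕ
  | n, .var, _, _, _ => n
  | _, .app M N, σ, j, p =>
      match p with
      | .inl p => upT M (fun m p => σ m (.inl p)) j p
      | .inr p => upT N (fun m p => σ m (.inr p)) j p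
  | _, .lam M, σ, j, p => upT M σ j p

/-- The outer position `↖ p`. -/
def ulT : ∀ {n : ℕ} (M : Tm n) (σ : ∀ m, Pos M m → Tm m) (j : ℕ)
    (p : Pos (subst M σ) j), Pos M (upT M σ j p)
  | _, .var, _, _, _ => ⟨rfl⟩
  | _, .app M N, σ, j, p =>
      match p with
      | .inl p => .inl (ulT M (fun m p => σ m (.inl p)) j p)
      | .inr p => .inr (ulT N (fun m p => σ m (.inr p)) j p)
  | _, .lam M, σ, j, p => ulT M σ j p

/-- The inner position `↗ p`. -/
def urT : ∀ {n : ℕ} (M : Tm n) (σ : ∀ m, Pos M m → Tm m) (j : ℕ)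
    (p : Pos (subst M σ) j), Pos (σ (upT M σ j p) (ulT M σ j p)) j
  | _, .var, _, _, p => p
  | _, .app M N, σ, j, p =>
      match p with
      | .inl p => urT M (fun m p => σ m (.inl p)) j p
      | .inr p => urT N (fun m p => σ m (.inr p)) j p
  | _, .lam M, σ, j, p => urT M σ j p

/-- substitution of well-scoped λ-term shapes is associative:
`(M • σ) • ⟨τ⟩ = M • (λ k q, σ k q • τ k q)`, where
`⟨τ⟩ ℓ r := τ (↑ r) (↖ r) ℓ (↗ r)`. -/
theorem subst_assoc {n : ℕ} (M : Tm n) (σ : ∀ m, Pos M m → Tm m)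
    (τ : ∀ (k : ℕ) (q : Pos M k) (l : ℕ), Pos (σ k q) l → Tm l) :
    subst (subst M σ) (fun l r => τ (upT M σ l r) (ulT M σ l r) l (urT M σ l r)) =
      subst M (fun k q => subst (σ k q) (τ k q)) := by
  induction M with
  | var => rfl
  | app M N ihM ihN =>
      exact congrArg₂ Tm.app
        (ihM (fun m p => σ m (.inl p)) (fun k q => τ k (.inl q)))
        (ihN (fun m p => σ m (.inr p)) (fun k q => τ k (.inr q)))
  | lam M ih => exact congrArg Tm.lam (ih σ τ)
end
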